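/- arXiv:2508.19085 — 5 statements merged into one kernel-verified Lean document; each statement's English description precedes it below -/
import Mathlib

section
/- Let v_1, …, v_m be unit vectors in ℂ^d with m ≥ 1, let Π_i = v_i v_i* and S = Σ_{i=1}^m Π_i, and suppose S is positive definite. Let F = max_{i≠j} |⟨v_i, v_j⟩| and assume 4(m−1)F² ≤ 1. Then the worst-case success probability of the Pretty Good Measurement satisfies min_{1≤i≤m} Tr(S^{−1/2} Π_i S^{−1/2} Π_i) ≥ (1 − 4(m−1)F²)² / (1 + mF²). -/
/-!
Write `C = S^{1/2}` and `u = vᵢ`; the PGM success probability is `⟨u, C⁻¹u⟩²`.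
Cauchy–Schwarz for the inner product defined by `C⁻¹`, applied to `u` and `Cu`, gives
`1 ≤ ⟨u, C⁻¹u⟩⟨u, Cu⟩`, and for the standard inner product `⟨u, Cu⟩² ≤ ⟨u, Su⟩`.
Expanding `S`, `⟨u, Su⟩ = Σⱼ |⟨vⱼ, u⟩|² ≤ 1 + (m - 1)F²`, so the success probability is at
least `1 / (1 + (m - 1)F²)`, which dominates the claimed bound.
-/

open Matrix ComplexOrder

/-- The positive semidefinite square root (Mathlib's former `Matrix.PosSemidef.sqrt`). -/
noncomputable def Matrix.PosSemidef.sqrt {n 𝕜 : Type*} [Fintype n] [DecidableEq n] [RCLike 𝕜]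
    {A : Matrix n n 𝕜} (hA : A.PosSemidef) : Matrix n n 𝕜 :=
  (hA.1.eigenvectorUnitary : Matrix n n 𝕜) *
    diagonal ((fun x : ℝ => (x : 𝕜)) ∘ (√·) ∘ hA.1.eigenvalues) *
    (star hA.1.eigenvectorUnitary : Matrix n n 𝕜)

namespace Matrix

variable {n 𝕜 : Type*} [Fintype n] [RCLike 𝕜]

section Sqrt

variable [DecidableEq n] {A : Matrix n n 𝕜}

lemma PosSemidef.posSemidef_sqrt (hA : A.PosSemidef) : hA.sqrt.PosSemidef := by
  have hD : PosSemidef (diagonal ((fun x : ℝ => (x : 𝕜)) ∘ (√·) ∘ hA.1.eigenvalues)) :=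
    posSemidef_diagonal_iff.mpr fun i => RCLike.ofReal_nonneg.mpr (Real.sqrt_nonneg _)
  rw [PosSemidef.sqrt, star_eq_conjTranspose]
  exact hD.mul_mul_conjTranspose_same _

lemma PosSemidef.sqrt_mul_self (hA : A.PosSemidef) : hA.sqrt * hA.sqrt = A := by
  have hU : (star hA.1.eigenvectorUnitary : Matrix n n 𝕜) * hA.1.eigenvectorUnitary = 1 :=
    Unitary.coe_star_mul_self _
  have hD : diagonal ((fun x : ℝ => (x : 𝕜)) ∘ (√·) ∘ hA.1.eigenvalues) *
      diagonal ((fun x : ℝ => (x : 𝕜)) ∘ (√·) ∘ hA.1.eigenvalues) =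
      diagonal (RCLike.ofReal ∘ hA.1.eigenvalues) := by
    rw [diagonal_mul_diagonal]
    congr 1
    funext i
    simp only [Function.comp_apply, ← RCLike.ofReal_mul,
      Real.mul_self_sqrt (hA.eigenvalues_nonneg i)]
  conv_rhs => rw [hA.1.spectral_theorem, Unitary.conjStarAlgAut_apply, ← hD]
  simp only [PosSemidef.sqrt, mul_assoc]
  rw [← mul_assoc (star hA.1.eigenvectorUnitary : Matrix n n 𝕜), hU, one_mul]

lemma PosDef.posDef_sqrt (hA : A.PosDef) : hA.posSemidef.sqrt.PosDef := by
  refine hA.posSemidef.posSemidef_sqrt.posDef_iff_isUnit.mpr ((isUnit_iff_isUnit_det _).mpr ?_)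
  refine isUnit_of_mul_isUnit_left (y := hA.posSemidef.sqrt.det) ?_
  rw [← det_mul, hA.posSemidef.sqrt_mul_self]
  exact (isUnit_iff_isUnit_det A).mp hA.isUnit

end Sqrt

lemma PosSemidef.norm_dotProduct_mulVec_sq_le {M : Matrix n n 𝕜} (hM : M.PosSemidef)
    (x y : n → 𝕜) :
    ‖star x ⬝ᵥ M *ᵥ y‖ ^ 2 ≤
      RCLike.re (star x ⬝ᵥ M *ᵥ x) * RCLike.re (star y ⬝ᵥ M *ᵥ y) := by
  let := M.toSeminormedAddCommGroup hM
  let := M.toInnerProductSpace hM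
  have hinner : ∀ a b : n → 𝕜, inner 𝕜 a b = star a ⬝ᵥ M *ᵥ b := fun a b => dotProduct_comm _ _
  have h := inner_mul_inner_self_le (𝕜 := 𝕜) x y
  rw [norm_inner_symm y x, ← sq] at h
  simpa only [hinner] using h

lemma PosDef.inv_re_dotProduct_mul_self_mulVec_le [DecidableEq n] {C : Matrix n n 𝕜}
    (hC : C.PosDef) {u : n → 𝕜} (hu : star u ⬝ᵥ u = 1) :
    (RCLike.re (star u ⬝ᵥ (C * C) *ᵥ u))⁻¹ ≤ RCLike.re (star u ⬝ᵥ C⁻¹ *ᵥ u) ^ 2 := by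
  set s := RCLike.re (star u ⬝ᵥ C *ᵥ u)
  set t := RCLike.re (star u ⬝ᵥ C⁻¹ *ᵥ u)
  have hu0 : u ≠ 0 := by rintro rfl; simp at hu
  have hs : 0 < s := hC.re_dotProduct_pos hu0
  have hCC : star (C *ᵥ u) ⬝ᵥ C *ᵥ u = star u ⬝ᵥ (C * C) *ᵥ u := by
    rw [star_mulVec, ← dotProduct_mulVec, hC.isHermitian.eq, mulVec_mulVec]
  have hCinvC : C⁻¹ *ᵥ C *ᵥ u = u := by
    rw [mulVec_mulVec, nonsing_inv_mul _ ((isUnit_iff_isUnit_det C).mp hC.isUnit), one_mulVec]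
  have hts : 1 ≤ t * s := by
    have h := hC.inv.posSemidef.norm_dotProduct_mulVec_sq_le u (C *ᵥ u)
    rwa [hCinvC, hu, star_mulVec, ← dotProduct_mulVec, hC.isHermitian.eq, norm_one, one_pow] at h
  have hsq : s ^ 2 ≤ RCLike.re (star u ⬝ᵥ (C * C) *ᵥ u) := by
    have h := PosSemidef.one.norm_dotProduct_mulVec_sq_le u (C *ᵥ u)
    rw [one_mulVec, one_mulVec, hu, hCC, RCLike.one_re, one_mul] at h
    exact (pow_le_pow_left₀ hs.le (RCLike.re_le_norm _) 2).trans h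
  calc (RCLike.re (star u ⬝ᵥ (C * C) *ᵥ u))⁻¹ ≤ (s ^ 2)⁻¹ := inv_anti₀ (by positivity) hsq
    _ ≤ t ^ 2 := by
      rw [inv_le_iff_one_le_mul₀ (by positivity), ← mul_pow]
      exact one_le_pow₀ (by linarith)

lemma trace_mul_vecMulVec_mul_mul_vecMulVec {R : Type*} [CommRing R] (A : Matrix n n R)
    (u w : n → R) : trace (A * vecMulVec u w * A * vecMulVec u w) = (w ⬝ᵥ A *ᵥ u) ^ 2 := by
  rw [Matrix.mul_assoc (A * vecMulVec u w), mul_vecMulVec, vecMulVec_mul_vecMulVec,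
    trace_vecMulVec, dotProduct_smul, dotProduct_comm, smul_eq_mul, sq]

lemma IsHermitian.re_trace_mul_vecMulVec_mul_mul_vecMulVec {A : Matrix n n 𝕜}
    (hA : A.IsHermitian) (u : n → 𝕜) :
    RCLike.re (trace (A * vecMulVec u (star u) * A * vecMulVec u (star u))) =
      RCLike.re (star u ⬝ᵥ A *ᵥ u) ^ 2 := by
  have hreal : (RCLike.re (star u ⬝ᵥ A *ᵥ u) : 𝕜) = star u ⬝ᵥ A *ᵥ u := by
    rw [← RCLike.conj_eq_iff_re, ← RCLike.star_def, ← star_dotProduct, star_mulVec,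
      ← dotProduct_mulVec, hA.eq]
  rw [trace_mul_vecMulVec_mul_mul_vecMulVec]
  conv_lhs => rw [← hreal]
  rw [← RCLike.ofReal_pow, RCLike.ofReal_re]

lemma re_dotProduct_sum_vecMulVec_mulVec {ι : Type*} [Fintype ι] (v : ι → n → 𝕜)
    (u : n → 𝕜) :
    RCLike.re (star u ⬝ᵥ (∑ j, vecMulVec (v j) (star (v j))) *ᵥ u) =
      ∑ j, ‖star (v j) ⬝ᵥ u‖ ^ 2 := by
  rw [sum_mulVec, dotProduct_sum, map_sum]
  refine Finset.sum_congr rfl fun j _ => ?_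
  rw [dotProduct_mulVec, vecMul_vecMulVec, smul_dotProduct, smul_eq_mul, star_dotProduct,
    RCLike.star_def, RCLike.conj_mul, ← RCLike.ofReal_pow, RCLike.ofReal_re]

end Matrix

lemma sum_norm_sq_dotProduct_le {ι n 𝕜 : Type*} [Fintype ι] [Fintype n] [RCLike 𝕜]
    {v : ι → n → 𝕜} {F : ℝ} (hv : ∀ i, star (v i) ⬝ᵥ v i = 1)
    (hF : ∀ i j, i ≠ j → ‖star (v i) ⬝ᵥ v j‖ ≤ F) (i : ι) :
    ∑ j, ‖star (v j) ⬝ᵥ v i‖ ^ 2 ≤ 1 + (Fintype.card ι - 1) * F ^ 2 := by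
  classical
  rw [← Finset.add_sum_erase _ _ (Finset.mem_univ i), hv i, norm_one, one_pow]
  gcongr
  calc ∑ j ∈ Finset.univ.erase i, ‖star (v j) ⬝ᵥ v i‖ ^ 2
      ≤ ∑ j ∈ Finset.univ.erase i, F ^ 2 := Finset.sum_le_sum fun j hj =>
        pow_le_pow_left₀ (norm_nonneg _) (hF j i (Finset.ne_of_mem_erase hj)) 2
    _ = (Fintype.card ι - 1) * F ^ 2 := by
      rw [Finset.sum_const, Finset.card_erase_of_mem (Finset.mem_univ i), nsmul_eq_mul,
        Finset.card_univ, Nat.cast_pred (Fintype.card_pos_iff.mpr ⟨i⟩)]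

theorem worst_case_pgm_lower_bound_general {d m : ℕ} (hm : 1 ≤ m)
    (v : Fin m → (Fin d → ℂ))
    (hv : ∀ i, star (v i) ⬝ᵥ v i = 1)
    (S : Matrix (Fin d) (Fin d) ℂ)
    (hSdef : S = ∑ i, vecMulVec (v i) (star (v i)))
    (hS : S.PosDef)
    (F : ℝ)
    (hF : ∀ i j, i ≠ j → ‖star (v i) ⬝ᵥ v j‖ ≤ F)
    (hsmall : 4 * ((m : ℝ) - 1) * F ^ 2 ≤ 1) :
    (1 - 4 * ((m : ℝ) - 1) * F ^ 2) ^ 2 / (1 + m * F ^ 2) ≤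
      ⨅ i : Fin m, (Matrix.trace ((hS.posSemidef.sqrt)⁻¹ * vecMulVec (v i) (star (v i)) *
        (hS.posSemidef.sqrt)⁻¹ * vecMulVec (v i) (star (v i)))).re := by
  have : Nonempty (Fin m) := ⟨⟨0, hm⟩⟩
  have hm1 : (1 : ℝ) ≤ m := by exact_mod_cast hm
  have hC := hS.posDef_sqrt
  refine le_ciInf fun i => ?_
  have hvi : v i ≠ 0 := fun h => by simpa [h] using hv i
  have hx : 0 ≤ 4 * ((m : ℝ) - 1) * F ^ 2 := by
    have : (0 : ℝ) ≤ m - 1 := by linarith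
    positivity
  have hgram : RCLike.re (star (v i) ⬝ᵥ S *ᵥ v i) ≤ 1 + ((m : ℝ) - 1) * F ^ 2 := by
    rw [hSdef, re_dotProduct_sum_vecMulVec_mulVec]
    simpa using sum_norm_sq_dotProduct_le hv hF i
  rw [← RCLike.re_to_complex, hC.inv.isHermitian.re_trace_mul_vecMulVec_mul_mul_vecMulVec]
  calc (1 - 4 * ((m : ℝ) - 1) * F ^ 2) ^ 2 / (1 + m * F ^ 2)
      ≤ 1 / (1 + ((m : ℝ) - 1) * F ^ 2) := by
        gcongr
        all_goals nlinarith
    _ ≤ (RCLike.re (star (v i) ⬝ᵥ S *ᵥ v i))⁻¹ := by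
        rw [one_div]; exact inv_anti₀ (hS.re_dotProduct_pos hvi) hgram
    _ ≤ _ := by
        simpa only [hS.posSemidef.sqrt_mul_self] using
          hC.inv_re_dotProduct_mul_self_mulVec_le (hv i)

/-- Improved lower bound for the worst-case Pretty Good Measurement: for `m ≥ 1` unit
vectors `v₁, …, vₘ` in `ℂ^d` with `Πᵢ = vᵢ vᵢ*`, `S = Σᵢ Πᵢ` positive definite, pairwise
overlaps at most `F`, and `4(m−1)F² ≤ 1`, the worst-case PGM success probability
satisfies `min_i Tr(S^{−1/2} Πᵢ S^{−1/2} Πᵢ) ≥ (1 − 4(m−1)F²)² / (1 + mF²)`. -/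
theorem worst_case_pgm_lower_bound {d m : ℕ} (hm : 1 ≤ m)
    (v : Fin m → (Fin d → ℂ))
    (hv : ∀ i, star (v i) ⬝ᵥ v i = 1)
    (S : Matrix (Fin d) (Fin d) ℂ)
    (hSdef : S = ∑ i, vecMulVec (v i) (star (v i)))
    (hS : S.PosDef)
    (F : ℝ) (hF0 : 0 ≤ F)
    (hF : ∀ i j, i ≠ j → ‖star (v i) ⬝ᵥ v j‖ ≤ F)
    (hsmall : 4 * ((m : ℝ) - 1) * F ^ 2 ≤ 1) :
    (1 - 4 * ((m : ℝ) - 1) * F ^ 2) ^ 2 / (1 + m * F ^ 2) ≤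
      ⨅ i : Fin m, (Matrix.trace ((hS.posSemidef.sqrt)⁻¹ * vecMulVec (v i) (star (v i)) *
        (hS.posSemidef.sqrt)⁻¹ * vecMulVec (v i) (star (v i)))).re :=
  worst_case_pgm_lower_bound_general hm v hv S hSdef hS F hF hsmall
end

section
/- For every real number m ≥ 4 and every real F with 0 < F ≤ 1, one has (1 − 4(m−1)F²)² / (1 + mF²) > 1 − mF. -/
/-- For every real `m ≥ 4` and every real `F` with `0 < F ≤ 1`, the refined PGM bound
exceeds the linear bound: `(1 − 4(m−1)F²)² / (1 + mF²) > 1 − mF`. -/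
theorem refined_bound_gt_linear_bound (m F : ℝ) (hm : 4 ≤ m) (hF0 : 0 < F) (hF1 : F ≤ 1) :
    (1 - 4 * (m - 1) * F ^ 2) ^ 2 / (1 + m * F ^ 2) > 1 - m * F := by
  have hd : 0 < 1 + m * F ^ 2 := by positivity
  rw [gt_iff_lt, lt_div_iff₀ hd]
  have key : 0 < m - (9 * m - 8) * F + m ^ 2 * F ^ 2 + 16 * (m - 1) ^ 2 * F ^ 3 := by
    nlinarith [sq_nonneg (m * F - 2), sq_nonneg (m * F - 3), sq_nonneg (4 * F - 1),
      sq_nonneg (5 * F - 1), mul_nonneg (mul_nonneg hF0.le hF0.le) hF0.le,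
      mul_nonneg (sub_nonneg.mpr hm) hF0.le, mul_nonneg (sub_nonneg.mpr hm) (sq_nonneg F),
      mul_nonneg (mul_nonneg (sub_nonneg.mpr hm) hF0.le) (sq_nonneg (m * F - 1)),
      mul_nonneg (mul_nonneg (sub_nonneg.mpr hm) hF0.le) hF0.le, sq_nonneg (12 * F ^ 2 - 1)]
  nlinarith [mul_pos hF0 key]
end

section
/- Define g(F, m) = (1 − 4(m−1)F²)² − (1 + mF²)(1 − mF). For every real m ≥ 4 and every real F with 0 < F ≤ 1, one has g(F, m) > 0. -/
/-- `g(F, m) = (1 − 4(m−1)F²)² − (1 + mF²)(1 − mF)`. -/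
noncomputable def g (F m : ℝ) : ℝ :=
  (1 - 4 * (m - 1) * F ^ 2) ^ 2 - (1 + m * F ^ 2) * (1 - m * F)

/-- For every real `m ≥ 4` and every real `F` with `0 < F ≤ 1`, one has `g(F, m) > 0`. -/
theorem g_pos (m F : ℝ) (hm : 4 ≤ m) (hF0 : 0 < F) (hF1 : F ≤ 1) : g F m > 0 := by
  have hm0 : (0:ℝ) ≤ m - 4 := by linarith
  have hp : 4 - 28*F + 16*F^2 + 144*F^3 > 0 := by
    nlinarith [mul_nonneg hF0.le (sq_nonneg (50*F - 11)), sq_nonneg (F - 11/50), sq_nonneg (4960*F - 1093)]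
  have hq : 1 - 9*F + 8*F^2 + 96*F^3 > 0 := by
    nlinarith [mul_nonneg hF0.le (sq_nonneg (20*F - 3)), sq_nonneg (F - 3/20), sq_nonneg (368*F - 34)]
  have hc : (m-4)^2 * (F^2 + 16*F^3) ≥ 0 := by positivity
  have hq' : (m-4) * (1 - 9*F + 8*F^2 + 96*F^3) ≥ 0 := mul_nonneg hm0 hq.le
  have h : m - (9*m-8)*F + m^2*F^2 + 16*(m-1)^2*F^3 > 0 := by nlinarith [hp, hq', hc]
  have heq : g F m = F * (m - (9*m-8)*F + m^2*F^2 + 16*(m-1)^2*F^3) := by unfold g; ring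
  rw [heq]
  positivity
end

section
/- Define h(F, m) = 16(m−1)²F³ + m²F² − 8(m−1)F − mF + m. For every real m ≥ 4 and every real F with 0 < F ≤ 1, one has h(F, m) > 0. -/
/-- `h(F, m) = 16(m−1)²F³ + m²F² − 8(m−1)F − mF + m`. -/
noncomputable def h (F m : ℝ) : ℝ :=
  16 * (m - 1) ^ 2 * F ^ 3 + m ^ 2 * F ^ 2 - 8 * (m - 1) * F - m * F + m

/-- For every real `m ≥ 4` and every real `F` with `0 < F ≤ 1`, one has `h(F, m) > 0`. -/
theorem h_pos (m F : ℝ) (hm : 4 ≤ m) (hF0 : 0 < F) (hF1 : F ≤ 1) : h F m > 0 := by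
  have hb : 96*F^3 + 8*F^2 - 9*F + 1 ≥ 0 := by
    nlinarith [mul_nonneg hF0.le (sq_nonneg (20*F-3)), sq_nonneg (20*F-3), sq_nonneg F,
      mul_nonneg hF0.le (sq_nonneg F)]
  have hc : 144*F^3 + 16*F^2 - 28*F + 4 > 0 := by
    nlinarith [mul_nonneg hF0.le (sq_nonneg (9*F-2)), sq_nonneg (9*F-2), sq_nonneg F,
      mul_nonneg hF0.le (sq_nonneg F), mul_pos hF0 hF0]
  have ha : F^2*(16*F+1) ≥ 0 := by positivity
  have hm4 : m - 4 ≥ 0 := by linarith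
  unfold h
  nlinarith [mul_nonneg (mul_nonneg hm4 hm4) ha, mul_nonneg hm4 hb, hc, sq_nonneg (m-4)]
end

section
/- Let v_1, …, v_m be unit vectors in ℂ^d, let Π_i = v_i v_i*, and let F = max_{i≠j} |⟨v_i, v_j⟩|. For every k with 1 ≤ k ≤ m, the success probability of the sequential measurement on input v_k satisfies ⟨v_k, (I−Π_1)⋯(I−Π_{k−1}) Π_k (I−Π_{k−1})⋯(I−Π_1) v_k⟩ ≥ 1 − 4(m−1)F². -/
open Matrix ComplexOrder
open scoped InnerProductSpace
open WithLp (toLp)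

/-!
Put `x₀ = v_k` and `x_j = (I - Π_j) x_{j-1}` for `j < k`, and let `c_j = |⟨v_j, x_{j-1}⟩|`.
Step `j` lowers `‖x‖²` by exactly `c_j²` and moves `⟨v_k, x⟩` by `c_j |⟨v_k, v_j⟩| ≤ c_j F`, so by
Cauchy–Schwarz `|⟨v_k, x_n⟩ - 1|² ≤ n F² (1 - ‖x_n‖²) ≤ n F² (1 - |⟨v_k, x_n⟩|²)` with `n = k - 1`.
This quadratic inequality forces `A = |⟨v_k, x_n⟩|` to satisfy `A² ≥ 1 - 4 n F²`. Finally the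
success probability is exactly `A²`, since the left product of projections is the adjoint of the
right one.
-/

lemma add_sq_le_succ_mul {a b X N : ℝ} (hN : 0 ≤ N) (hX : 0 ≤ X) (ha : a ^ 2 ≤ N * X) :
    (a + b) ^ 2 ≤ (N + 1) * (X + b ^ 2) := by
  rcases hN.eq_or_lt with rfl | hN
  · nlinarith [sq_nonneg a]
  · -- `2ab ≤ a² / N + N b²`, multiplied through by `N`
    refine le_of_mul_le_mul_left ?_ hN
    nlinarith [sq_nonneg (a - N * b)]

lemma one_sub_four_mul_le_sq {A δ q : ℝ} (hA : 0 ≤ A) (hq : 0 ≤ q) (hδ : 1 - A ≤ δ)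
    (h : δ ^ 2 ≤ q * (1 - A ^ 2)) : 1 - 4 * q ≤ A ^ 2 := by
  rcases le_or_gt 1 A with hA1 | hA1
  · nlinarith
  have hsq : (1 - A) ^ 2 ≤ q * (1 - A) * (1 + A) :=
    (pow_le_pow_left₀ (by linarith) hδ 2).trans (by linarith)
  have : 1 - A ≤ q * (1 + A) := le_of_mul_le_mul_left (by nlinarith) (sub_pos.mpr hA1)
  nlinarith

section RemoveComponent

variable {𝕜 E : Type*} [RCLike 𝕜] [NormedAddCommGroup E] [InnerProductSpace 𝕜 E]

variable (𝕜) in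
/-- For a unit vector `w` this is `(I - Π_w) x`, the unnormalised state after outcome `I - Π_w`. -/
def removeComponent (x w : E) : E := x - ⟪w, x⟫_𝕜 • w

lemma norm_removeComponent_sq {w : E} (hw : ‖w‖ = 1) (x : E) :
    ‖removeComponent 𝕜 x w‖ ^ 2 = ‖x‖ ^ 2 - ‖⟪w, x⟫_𝕜‖ ^ 2 := by
  rw [removeComponent, @norm_sub_sq 𝕜, inner_smul_right, ← inner_conj_symm, RCLike.conj_mul,
    norm_smul, RCLike.norm_conj, hw]
  norm_cast
  ring

lemma inner_removeComponent_right (e x w : E) :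
    ⟪e, removeComponent 𝕜 x w⟫_𝕜 = ⟪e, x⟫_𝕜 - ⟪w, x⟫_𝕜 * ⟪e, w⟫_𝕜 := by
  rw [removeComponent, inner_sub_right, inner_smul_right]

lemma norm_foldl_removeComponent_le {l : List E} (hl : ∀ w ∈ l, ‖w‖ = 1) (x : E) :
    ‖l.foldl (removeComponent 𝕜) x‖ ≤ ‖x‖ := by
  induction l generalizing x with
  | nil => rfl
  | cons w t ih =>
    have hstep : ‖removeComponent 𝕜 x w‖ ≤ ‖x‖ := by
      refine (pow_le_pow_iff_left₀ (norm_nonneg _) (norm_nonneg _) two_ne_zero).mp ?_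
      rw [norm_removeComponent_sq (hl w List.mem_cons_self)]
      nlinarith [norm_nonneg (⟪w, x⟫_𝕜)]
    exact (ih (fun u hu => hl u (List.mem_cons_of_mem _ hu)) _).trans hstep

lemma norm_inner_foldl_removeComponent_sub_sq_le {e : E} {F : ℝ} {l : List E}
    (hl : ∀ w ∈ l, ‖w‖ = 1) (hF : ∀ w ∈ l, ‖⟪e, w⟫_𝕜‖ ≤ F) (x : E) :
    ‖⟪e, l.foldl (removeComponent 𝕜) x⟫_𝕜 - ⟪e, x⟫_𝕜‖ ^ 2 ≤
      l.length * F ^ 2 * (‖x‖ ^ 2 - ‖l.foldl (removeComponent 𝕜) x‖ ^ 2) := by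
  induction l generalizing x with
  | nil => simp
  | cons w t ih =>
    have hw : ‖w‖ = 1 := hl w List.mem_cons_self
    have ht : ∀ u ∈ t, ‖u‖ = 1 := fun u hu => hl u (List.mem_cons_of_mem _ hu)
    set x' := removeComponent 𝕜 x w
    set y := t.foldl (removeComponent 𝕜) x'
    have hfirst : ‖⟪e, x'⟫_𝕜 - ⟪e, x⟫_𝕜‖ ≤ ‖⟪w, x⟫_𝕜‖ * F := by
      rw [inner_removeComponent_right, sub_sub_cancel_left, norm_neg, norm_mul]
      exact mul_le_mul_of_nonneg_left (hF w List.mem_cons_self) (norm_nonneg _)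
    have htri : ‖⟪e, y⟫_𝕜 - ⟪e, x⟫_𝕜‖ ≤ ‖⟪e, y⟫_𝕜 - ⟪e, x'⟫_𝕜‖ + ‖⟪w, x⟫_𝕜‖ * F :=
      (norm_sub_le_norm_sub_add_norm_sub _ _ _).trans (by gcongr)
    have hrest := ih ht (fun u hu => hF u (List.mem_cons_of_mem _ hu)) x'
    have hy : ‖y‖ ≤ ‖x'‖ := norm_foldl_removeComponent_le ht x'
    have hx' := norm_removeComponent_sq (𝕜 := 𝕜) hw x
    calc ‖⟪e, y⟫_𝕜 - ⟪e, x⟫_𝕜‖ ^ 2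
        ≤ (‖⟪e, y⟫_𝕜 - ⟪e, x'⟫_𝕜‖ + ‖⟪w, x⟫_𝕜‖ * F) ^ 2 :=
          pow_le_pow_left₀ (norm_nonneg _) htri 2
      _ ≤ (t.length + 1) * (F ^ 2 * (‖x'‖ ^ 2 - ‖y‖ ^ 2) + (‖⟪w, x⟫_𝕜‖ * F) ^ 2) :=
          add_sq_le_succ_mul (Nat.cast_nonneg _)
            (mul_nonneg (sq_nonneg F) (sub_nonneg.mpr (by gcongr))) (by linarith)
      _ = (w :: t).length * F ^ 2 * (‖x‖ ^ 2 - ‖y‖ ^ 2) := by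
          rw [List.length_cons, hx']
          push_cast
          ring

theorem one_sub_four_mul_le_norm_inner_foldl_removeComponent_sq {e : E} (he : ‖e‖ = 1)
    {F : ℝ} {l : List E} (hl : ∀ w ∈ l, ‖w‖ = 1) (hF : ∀ w ∈ l, ‖⟪e, w⟫_𝕜‖ ≤ F) :
    1 - 4 * l.length * F ^ 2 ≤ ‖⟪e, l.foldl (removeComponent 𝕜) e⟫_𝕜‖ ^ 2 := by
  have hclose := norm_inner_foldl_removeComponent_sub_sq_le hl hF e
  rw [inner_self_eq_one_of_norm_eq_one he, he, one_pow] at hclose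
  have hle := norm_inner_le_norm (𝕜 := 𝕜) e (l.foldl (removeComponent 𝕜) e)
  rw [he, one_mul] at hle
  rw [mul_assoc]
  refine one_sub_four_mul_le_sq (norm_nonneg _) (by positivity) ?_ (hclose.trans ?_)
  · simpa [norm_sub_rev] using norm_sub_norm_le 1 ⟪e, l.foldl (removeComponent 𝕜) e⟫_𝕜
  · gcongr

end RemoveComponent

section Matrix

variable {𝕜 n ι : Type*} [RCLike 𝕜] [Fintype n]

lemma norm_toLp_eq_one {x : n → 𝕜} (hx : star x ⬝ᵥ x = 1) : ‖toLp 2 x‖ = 1 := by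
  have h := inner_self_eq_norm_sq_to_K (𝕜 := 𝕜) (toLp 2 x)
  rw [EuclideanSpace.inner_toLp_toLp, dotProduct_comm, hx] at h
  have : ‖toLp 2 x‖ ^ 2 = 1 := by exact_mod_cast h.symm
  exact (pow_eq_one_iff_of_nonneg (norm_nonneg _) two_ne_zero).mp this

lemma star_dotProduct_conjTranspose_mul_vecMulVec_mul_mulVec (R : Matrix n n 𝕜) (y : n → 𝕜) :
    star y ⬝ᵥ ((Rᴴ * vecMulVec y (star y) * R) *ᵥ y) = ((‖star y ⬝ᵥ R *ᵥ y‖ ^ 2 : ℝ) : 𝕜) := by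
  have hstar : star y ⬝ᵥ Rᴴ *ᵥ y = star (star y ⬝ᵥ R *ᵥ y) := by
    conv_rhs => rw [star_dotProduct, star_star, star_mulVec, ← dotProduct_mulVec]
  rw [← mulVec_mulVec, ← mulVec_mulVec, vecMulVec_mulVec, op_smul_eq_smul, mulVec_smul,
    dotProduct_smul, smul_eq_mul, hstar]
  push_cast
  exact RCLike.mul_conj _

variable [DecidableEq n]

lemma toLp_one_sub_vecMulVec_star_mulVec (w x : n → 𝕜) :
    toLp 2 ((1 - vecMulVec w (star w)) *ᵥ x) = removeComponent 𝕜 (toLp 2 x) (toLp 2 w) := by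
  rw [sub_mulVec, one_mulVec, vecMulVec_mulVec, op_smul_eq_smul, removeComponent,
    EuclideanSpace.inner_toLp_toLp, dotProduct_comm]
  rfl

lemma toLp_prod_reverse_map_one_sub_vecMulVec_mulVec (u : ι → n → 𝕜) (l : List ι) (x : n → 𝕜) :
    toLp 2 ((l.reverse.map fun i => 1 - vecMulVec (u i) (star (u i))).prod *ᵥ x) =
      (l.map fun i => toLp 2 (u i)).foldl (removeComponent 𝕜) (toLp 2 x) := by
  induction l generalizing x with
  | nil => simp
  | cons i t ih =>
    rw [List.reverse_cons, List.map_append, List.prod_append, List.map_singleton,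
      List.prod_singleton, ← mulVec_mulVec, List.map_cons, List.foldl_cons,
      ← toLp_one_sub_vecMulVec_star_mulVec, ih]

lemma prod_map_one_sub_vecMulVec_star (u : ι → n → 𝕜) (l : List ι) :
    (l.map fun i => 1 - vecMulVec (u i) (star (u i))).prod =
      (l.reverse.map fun i => 1 - vecMulVec (u i) (star (u i))).prodᴴ := by
  rw [conjTranspose_list_prod, List.map_map, List.map_reverse, List.reverse_reverse]
  congr 1
  refine List.map_congr_left fun i _ => ?_
  simp

end Matrix

theorem sequential_measurement_success_lower_bound_general {d m : ℕ} (v : Fin m → (Fin d → ℂ))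
    (hv : ∀ i, star (v i) ⬝ᵥ v i = 1)
    (F : ℝ)
    (hF : ∀ i j, i ≠ j → ‖star (v i) ⬝ᵥ v j‖ ≤ F)
    (k : Fin m) :
    letI Pi : Fin m → Matrix (Fin d) (Fin d) ℂ := fun i => vecMulVec (v i) (star (v i))
    letI L : Matrix (Fin d) (Fin d) ℂ :=
      (((List.finRange m).filter (fun i => i < k)).map (fun i => 1 - Pi i)).prod
    letI R : Matrix (Fin d) (Fin d) ℂ :=
      ((((List.finRange m).filter (fun i => i < k)).reverse).map (fun i => 1 - Pi i)).prod
    ((1 - 4 * ((m : ℝ) - 1) * F ^ 2 : ℝ) : ℂ) ≤ star (v k) ⬝ᵥ ((L * Pi k * R) *ᵥ v k) := by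
  dsimp only
  rw [prod_map_one_sub_vecMulVec_star, star_dotProduct_conjTranspose_mul_vecMulVec_mul_mulVec]
  refine (RCLike.ofReal_le_ofReal (K := ℂ)).mpr ?_
  set l := (List.finRange m).filter (fun i => i < k)
  have hlen : (l.length : ℝ) ≤ m - 1 := by
    have : l.length < m := by
      simpa [l] using List.length_filter_lt_length_iff_exists.mpr
        ⟨k, List.mem_finRange k, by simp⟩
    rw [le_sub_iff_add_le]
    exact_mod_cast this
  have hunit : ∀ w ∈ l.map fun i => toLp 2 (v i), ‖w‖ = 1 :=
    List.forall_mem_map.mpr fun i _ => norm_toLp_eq_one (hv i)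
  have hoverlap : ∀ w ∈ l.map fun i => toLp 2 (v i), ‖⟪toLp 2 (v k), w⟫_ℂ‖ ≤ F := by
    refine List.forall_mem_map.mpr fun i hi => ?_
    rw [EuclideanSpace.inner_toLp_toLp, dotProduct_comm]
    exact hF k i (ne_of_gt (by simpa using List.of_mem_filter hi))
  have hbound :=
    one_sub_four_mul_le_norm_inner_foldl_removeComponent_sq (norm_toLp_eq_one (hv k)) hunit hoverlap
  rw [← toLp_prod_reverse_map_one_sub_vecMulVec_mulVec, EuclideanSpace.inner_toLp_toLp,
    dotProduct_comm, List.length_map] at hbound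
  refine le_trans ?_ hbound
  show 1 - 4 * ((m : ℝ) - 1) * F ^ 2 ≤ 1 - 4 * l.length * F ^ 2
  gcongr

/-- Quantum-union-bound guarantee for the sequential measurement algorithm: for unit
vectors `v₁, …, vₘ` in `ℂ^d` with pairwise overlaps at most `F`, the probability
`⟨v_k, (I−Π₁)⋯(I−Π_{k−1}) Π_k (I−Π_{k−1})⋯(I−Π₁) v_k⟩` of the correct outcome sequence
on input `v_k` is at least `1 − 4(m−1)F²`. -/
theorem sequential_measurement_success_lower_bound {d m : ℕ} (v : Fin m → (Fin d → ℂ))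
    (hv : ∀ i, star (v i) ⬝ᵥ v i = 1)
    (F : ℝ) (hF0 : 0 ≤ F)
    (hF : ∀ i j, i ≠ j → ‖star (v i) ⬝ᵥ v j‖ ≤ F)
    (k : Fin m) :
    letI Pi : Fin m → Matrix (Fin d) (Fin d) ℂ := fun i => vecMulVec (v i) (star (v i))
    letI L : Matrix (Fin d) (Fin d) ℂ :=
      (((List.finRange m).filter (fun i => i < k)).map (fun i => 1 - Pi i)).prod
    letI R : Matrix (Fin d) (Fin d) ℂ :=
      ((((List.finRange m).filter (fun i => i < k)).reverse).map (fun i => 1 - Pi i)).prod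
    ((1 - 4 * ((m : ℝ) - 1) * F ^ 2 : ℝ) : ℂ) ≤ star (v k) ⬝ᵥ ((L * Pi k * R) *ᵥ v k) :=
  sequential_measurement_success_lower_bound_general v hv F hF k
end
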